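/- arXiv:1607.00419 — 2 statements merged into one kernel-verified Lean document; each statement's English description precedes it below -/
import Mathlib

section
/- Under the same Volterra equation hypotheses, if H*(n) := max_{1 ≤ j ≤ n} |H(j)| → ∞ as n → ∞, then x*(n) := max_{0 ≤ j ≤ n} |x(j)| → ∞ as n → ∞. -/
open Filter Finset Topology

/-- Running maximum of `g` over `{1,…,n}` (value `0` when `n = 0`). -/
noncomputable def runMax1 (g : ℕ → ℝ) (n : ℕ) : ℝ :=
  if h : 1 ≤ n then (Finset.Icc 1 n).sup' (Finset.nonempty_Icc.mpr h) g else 0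

/-- Running maximum of `g` over `{0,…,n}`. -/
noncomputable def runMax0 (g : ℕ → ℝ) (n : ℕ) : ℝ :=
  (Finset.Icc 0 n).sup' (Finset.nonempty_Icc.mpr (Nat.zero_le n)) g

/-!
If `x*` stayed bounded, then `x` would be bounded, hence so would `f ∘ x` by continuity of `f`, and
the convolution term `∑ k (n - j) f (x j)` would be bounded by `(∑ |k j|) · sup |f ∘ x|`. Solving the
equation for `H (n + 1)` then bounds `H`, hence `H*`, contradicting `H* → ∞`.
-/

lemma runMax0_mono (g : ℕ → ℝ) : Monotone (runMax0 g) :=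
  fun _ _ hab => Finset.sup'_mono _ (Finset.Icc_subset_Icc le_rfl hab) _

lemma le_runMax0 (g : ℕ → ℝ) (n : ℕ) : g n ≤ runMax0 g n :=
  Finset.le_sup' g (Finset.mem_Icc.mpr ⟨Nat.zero_le n, le_rfl⟩)

lemma runMax1_le {g : ℕ → ℝ} {B : ℝ} (hg : ∀ m, g (m + 1) ≤ B) (hB : 0 ≤ B) (n : ℕ) :
    runMax1 g n ≤ B := by
  unfold runMax1
  split
  · refine Finset.sup'_le _ _ fun j hj => ?_
    obtain ⟨m, rfl⟩ := Nat.exists_eq_add_of_le' (Finset.mem_Icc.mp hj).1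
    exact hg m
  · exact hB

lemma Continuous.exists_bound_comp_of_abs_le {f : ℝ → ℝ} (hf : Continuous f) {x : ℕ → ℝ} {b : ℝ}
    (hxb : ∀ n, |x n| ≤ b) : ∃ C, ∀ n, |f (x n)| ≤ C := by
  obtain ⟨C, hC⟩ := (isCompact_Icc (a := -b) (b := b)).exists_bound_of_continuousOn hf.continuousOn
  exact ⟨C, fun n => hC _ (abs_le.mp (hxb n))⟩

lemma abs_sum_range_conv_le {k u : ℕ → ℝ} (hk : Summable fun j => |k j|) {C : ℝ}
    (hu : ∀ j, |u j| ≤ C) (n : ℕ) :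
    |∑ j ∈ range (n + 1), k (n - j) * u j| ≤ (∑' j, |k j|) * C := by
  have hC : 0 ≤ C := (abs_nonneg _).trans (hu 0)
  calc |∑ j ∈ range (n + 1), k (n - j) * u j|
      ≤ ∑ j ∈ range (n + 1), |k (n - j)| * |u j| := by
        simpa only [abs_mul] using Finset.abs_sum_le_sum_abs (fun j => k (n - j) * u j) _
    _ ≤ ∑ j ∈ range (n + 1), |k (n - j)| * C :=
        Finset.sum_le_sum fun j _ => mul_le_mul_of_nonneg_left (hu j) (abs_nonneg _)
    _ = (∑ j ∈ range (n + 1), |k j|) * C := by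
        rw [← Finset.sum_mul, ← Finset.sum_range_reflect (fun j => |k j|), Nat.add_sub_cancel]
    _ ≤ (∑' j, |k j|) * C :=
        mul_le_mul_of_nonneg_right (hk.sum_le_tsum _ fun j _ => abs_nonneg _) hC

theorem stmt2_general
(f : ℝ → ℝ) (k H x : ℕ → ℝ)
    (hf : Continuous f)
    (hk : Summable (fun j => |k j|))
    (hx : ∀ n : ℕ, x (n + 1) = H (n + 1) + ∑ j ∈ Finset.range (n + 1), k (n - j) * f (x j))
    (hH : Filter.Tendsto (fun n => runMax1 (fun j => |H j|) n) Filter.atTop Filter.atTop) :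
    Filter.Tendsto (fun n => runMax0 (fun j => |x j|) n) Filter.atTop Filter.atTop := by
  refine (runMax0_mono _).tendsto_atTop_atTop_iff.mpr fun b => ?_
  by_contra! hbound
  have hxb : ∀ n, |x n| ≤ b := fun n => (le_runMax0 _ n).trans (hbound n).le
  obtain ⟨C, hC⟩ := hf.exists_bound_comp_of_abs_le hxb
  have hHb : ∀ m, |H (m + 1)| ≤ b + (∑' j, |k j|) * C := fun m => by
    calc |H (m + 1)| = |x (m + 1) - ∑ j ∈ range (m + 1), k (m - j) * f (x j)| := by
          rw [hx m, add_sub_cancel_right]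
      _ ≤ |x (m + 1)| + |∑ j ∈ range (m + 1), k (m - j) * f (x j)| := abs_sub _ _
      _ ≤ b + (∑' j, |k j|) * C := add_le_add (hxb _) (abs_sum_range_conv_le hk hC m)
  obtain ⟨n, hn⟩ := (hH.eventually_gt_atTop (b + (∑' j, |k j|) * C)).exists
  exact hn.not_ge (runMax1_le hHb ((abs_nonneg _).trans (hHb 0)) n)

theorem stmt2
(f : ℝ → ℝ) (k H x : ℕ → ℝ) (ξ : ℝ)
    (hf : Continuous f)
    (hsub : Filter.Tendsto (fun y => f y / y) (Filter.cocompact ℝ) (nhds 0))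
    (hk : Summable (fun j => |k j|))
    (hx0 : x 0 = ξ)
    (hx : ∀ n : ℕ, x (n + 1) = H (n + 1) + ∑ j ∈ Finset.range (n + 1), k (n - j) * f (x j))
    (hH : Filter.Tendsto (fun n => runMax1 (fun j => |H j|) n) Filter.atTop Filter.atTop) :
    Filter.Tendsto (fun n => runMax0 (fun j => |x j|) n) Filter.atTop Filter.atTop :=
  stmt2_general f k H x hf hk hx hH
end

section
/- Under the Volterra equation hypotheses, let φ : [0,∞) → [0,∞) be increasing and convex, and p ≥ 1 with φ(x) = x^p. Then limsup_{n→∞} (1/n) ∑_{j=1}^n |H(j)|^p < ∞ if and only if limsup_{n→∞} (1/n) ∑_{j=1}^n |x(j)|^p < ∞. -/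
/-!
Let `R m = ∑_{j ≤ m} |k (m - j)| |f (x j)|`, so that `|x (m+1)|` and `|H (m+1)|` differ by at most
`R m`. Hölder's inequality on each row of the convolution, followed by exchanging the order of
summation, gives the discrete Young inequality `∑_{m<N} R m ^ p ≤ ‖k‖₁ ^ p ∑_{j<N} |f (x j)| ^ p`,
and `f y = o(y)` gives `|f y| ≤ ε |y| + C_ε`. Together, for every `δ > 0`,
`∑_{m<N} R m ^ p ≤ δ ∑_{j=1}^N |x j| ^ p + C_δ (N + 1)`. With `δ = 1` the `H`-sums are bounded by
the `x`-sums; with `δ` small the `x`-sum on the right is absorbed into the left, bounding the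
`x`-sums by the `H`-sums. Both limsup conditions say exactly that these partial sums are `O(N)`.
-/

open Filter Finset Topology Asymptotics

theorem exists_abs_le_mul_abs_add_of_tendsto_div {f : ℝ → ℝ} (hf : Continuous f)
    (hsub : Tendsto (fun y => f y / y) (cocompact ℝ) (𝓝 0)) {ε : ℝ} (hε : 0 < ε) :
    ∃ C, 0 ≤ C ∧ ∀ y, |f y| ≤ ε * |y| + C := by
  obtain ⟨t, ht, hts⟩ := mem_cocompact.mp (hsub (Metric.ball_mem_nhds 0 hε))
  obtain ⟨C, hC⟩ := (ht.insert 0).exists_bound_of_continuousOn hf.continuousOn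
  have hC0 : 0 ≤ C := (abs_nonneg _).trans (hC 0 (Set.mem_insert 0 t))
  refine ⟨C, hC0, fun y => ?_⟩
  by_cases hy : y ∈ insert 0 t
  · linarith [Real.norm_eq_abs (f y) ▸ hC y hy, mul_nonneg hε.le (abs_nonneg y)]
  · have hy0 : y ≠ 0 := fun h => hy (h ▸ Set.mem_insert 0 t)
    have hlt : |f y| / |y| < ε := by
      simpa [Real.dist_eq, abs_div] using hts fun h => hy (Set.mem_insert_of_mem 0 h)
    rw [div_lt_iff₀ (abs_pos.mpr hy0)] at hlt
    linarith

theorem rpow_inner_le_weight_mul_Lp_of_nonneg {ι : Type*} (s : Finset ι) {p : ℝ} (hp : 1 ≤ p)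
    (w f : ι → ℝ) (hw : ∀ i, 0 ≤ w i) (hf : ∀ i, 0 ≤ f i) :
    (∑ i ∈ s, w i * f i) ^ p ≤ (∑ i ∈ s, w i) ^ (p - 1) * ∑ i ∈ s, w i * f i ^ p := by
  have hp0 : 0 < p := by linarith
  have hW : 0 ≤ ∑ i ∈ s, w i := sum_nonneg fun i _ => hw i
  have hWf : 0 ≤ ∑ i ∈ s, w i * f i ^ p :=
    sum_nonneg fun i _ => mul_nonneg (hw i) (Real.rpow_nonneg (hf i) p)
  calc (∑ i ∈ s, w i * f i) ^ p
      ≤ ((∑ i ∈ s, w i) ^ (1 - p⁻¹) * (∑ i ∈ s, w i * f i ^ p) ^ p⁻¹) ^ p :=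
        Real.rpow_le_rpow (sum_nonneg fun i _ => mul_nonneg (hw i) (hf i))
          (Real.inner_le_weight_mul_Lp_of_nonneg s hp w f hw hf) hp0.le
    _ = (∑ i ∈ s, w i) ^ (p - 1) * ∑ i ∈ s, w i * f i ^ p := by
        rw [Real.mul_rpow (Real.rpow_nonneg hW _) (Real.rpow_nonneg hWf _), ← Real.rpow_mul hW,
          ← Real.rpow_mul hWf, inv_mul_cancel₀ hp0.ne', Real.rpow_one, sub_mul, one_mul,
          inv_mul_cancel₀ hp0.ne']

theorem sum_rpow_conv_le {p : ℝ} (hp : 1 ≤ p) {a g : ℕ → ℝ} (ha : ∀ i, 0 ≤ a i)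
    (has : Summable a) (hg : ∀ i, 0 ≤ g i) (N : ℕ) :
    ∑ m ∈ range N, (∑ j ∈ range (m + 1), a (m - j) * g j) ^ p ≤
      (∑' i, a i) ^ p * ∑ j ∈ range N, g j ^ p := by
  set K := ∑' i, a i
  have hK : ∀ s : Finset ℕ, ∑ i ∈ s, a i ≤ K := fun s => has.sum_le_tsum s fun i _ => ha i
  have hK0 : 0 ≤ K := tsum_nonneg ha
  have hrow : ∀ m, (∑ j ∈ range (m + 1), a (m - j) * g j) ^ p ≤
      K ^ (p - 1) * ∑ j ∈ range (m + 1), a (m - j) * g j ^ p := by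
    intro m
    have hweight : ∑ j ∈ range (m + 1), a (m - j) ≤ K := by
      simpa using (sum_range_reflect a (m + 1)).trans_le (hK _)
    refine (rpow_inner_le_weight_mul_Lp_of_nonneg _ hp _ g (fun j => ha _) hg).trans ?_
    exact mul_le_mul_of_nonneg_right
      (Real.rpow_le_rpow (sum_nonneg fun j _ => ha _) hweight (by linarith))
      (sum_nonneg fun j _ => mul_nonneg (ha _) (Real.rpow_nonneg (hg j) p))
  have hcol : ∑ m ∈ range N, ∑ j ∈ range (m + 1), a (m - j) * g j ^ p ≤
      K * ∑ j ∈ range N, g j ^ p := by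
    simp only [range_eq_Ico]
    rw [← sum_Ico_Ico_comm 0 N (fun j m => a (m - j) * g j ^ p), mul_sum]
    refine sum_le_sum fun j _ => ?_
    rw [← sum_mul, sum_Ico_eq_sum_range]
    simp only [add_tsub_cancel_left]
    exact mul_le_mul_of_nonneg_right (hK _) (Real.rpow_nonneg (hg j) p)
  calc ∑ m ∈ range N, (∑ j ∈ range (m + 1), a (m - j) * g j) ^ p
      ≤ K ^ (p - 1) * ∑ m ∈ range N, ∑ j ∈ range (m + 1), a (m - j) * g j ^ p := by
        rw [mul_sum]; exact sum_le_sum fun m _ => hrow m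
    _ ≤ K ^ (p - 1) * (K * ∑ j ∈ range N, g j ^ p) :=
        mul_le_mul_of_nonneg_left hcol (Real.rpow_nonneg hK0 _)
    _ = K ^ p * ∑ j ∈ range N, g j ^ p := by
        rw [← mul_assoc, ← Real.rpow_add_one' hK0 (by linarith), sub_add_cancel]

theorem sum_rpow_le_of_abs_le_add {ι : Type*} (s : Finset ι) {p : ℝ} (hp : 1 ≤ p)
    {u v w : ι → ℝ} (hv : ∀ i, 0 ≤ v i) (hw : ∀ i, 0 ≤ w i) (huvw : ∀ i, |u i| ≤ v i + w i) :
    ∑ i ∈ s, |u i| ^ p ≤ 2 ^ (p - 1) * (∑ i ∈ s, v i ^ p + ∑ i ∈ s, w i ^ p) := by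
  rw [← sum_add_distrib, mul_sum]
  refine sum_le_sum fun i _ => ?_
  calc |u i| ^ p ≤ (v i + w i) ^ p :=
        Real.rpow_le_rpow (abs_nonneg _) (huvw i) (by linarith)
    _ ≤ 2 ^ (p - 1) * (v i ^ p + w i ^ p) := by
        lift v i to NNReal using hv i with a
        lift w i to NNReal using hw i with b
        exact_mod_cast NNReal.rpow_add_le_mul_rpow_add_rpow a b hp

theorem exists_sum_rpow_conv_le {f : ℝ → ℝ} (hf : Continuous f)
    (hsub : Tendsto (fun y => f y / y) (cocompact ℝ) (𝓝 0)) {a : ℕ → ℝ} (ha : ∀ i, 0 ≤ a i)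
    (has : Summable a) (x : ℕ → ℝ) {p : ℝ} (hp : 1 ≤ p) {δ : ℝ} (hδ : 0 < δ) :
    ∃ C, ∀ N : ℕ, ∑ m ∈ range N, (∑ j ∈ range (m + 1), a (m - j) * |f (x j)|) ^ p ≤
      δ * ∑ m ∈ range N, |x (m + 1)| ^ p + C * (N + 1) := by
  set K := ∑' i, a i
  have hKp : 0 ≤ K ^ p := Real.rpow_nonneg (tsum_nonneg ha) p
  set A := K ^ p * 2 ^ (p - 1) with hA_def
  have hA : 0 ≤ A := mul_nonneg hKp (by positivity)
  set ε := min 1 (δ / (A + 1))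
  have hε : 0 < ε := lt_min one_pos (by positivity)
  have hAε : A * ε ^ p ≤ δ :=
    calc A * ε ^ p ≤ A * (δ / (A + 1)) :=
          mul_le_mul_of_nonneg_left
            ((Real.rpow_le_self_of_le_one hε.le (min_le_left _ _) hp).trans (min_le_right _ _)) hA
      _ ≤ δ := by rw [mul_div_assoc', div_le_iff₀ (by linarith)]; nlinarith
  obtain ⟨C₀, hC₀, hf_le⟩ := exists_abs_le_mul_abs_add_of_tendsto_div hf hsub hε
  refine ⟨δ * |x 0| ^ p + A * C₀ ^ p, fun N => ?_⟩
  set T := ∑ m ∈ range N, |x (m + 1)| ^ p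
  have hx_sum : ∑ j ∈ range N, |x j| ^ p ≤ |x 0| ^ p + T :=
    calc ∑ j ∈ range N, |x j| ^ p ≤ ∑ j ∈ range (N + 1), |x j| ^ p :=
          sum_le_sum_of_subset_of_nonneg (range_subset_range.mpr N.le_succ)
            fun j _ _ => by positivity
      _ = |x 0| ^ p + T := by rw [sum_range_succ', add_comm]
  have hf_sum :
      ∑ j ∈ range N, |f (x j)| ^ p ≤ 2 ^ (p - 1) * (ε ^ p * (|x 0| ^ p + T) + N * C₀ ^ p) :=
    calc ∑ j ∈ range N, |f (x j)| ^ p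
        ≤ 2 ^ (p - 1) * (∑ j ∈ range N, (ε * |x j|) ^ p + ∑ j ∈ range N, C₀ ^ p) :=
          sum_rpow_le_of_abs_le_add _ hp (fun j => mul_nonneg hε.le (abs_nonneg _))
            (fun _ => hC₀) fun j => hf_le (x j)
      _ = 2 ^ (p - 1) * (ε ^ p * ∑ j ∈ range N, |x j| ^ p + N * C₀ ^ p) := by
          simp only [Real.mul_rpow hε.le (abs_nonneg _), ← mul_sum, sum_const, card_range,
            nsmul_eq_mul]
      _ ≤ 2 ^ (p - 1) * (ε ^ p * (|x 0| ^ p + T) + N * C₀ ^ p) := by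
          gcongr
  have hT : 0 ≤ T := sum_nonneg fun m _ => Real.rpow_nonneg (abs_nonneg _) p
  calc ∑ m ∈ range N, (∑ j ∈ range (m + 1), a (m - j) * |f (x j)|) ^ p
      ≤ K ^ p * ∑ j ∈ range N, |f (x j)| ^ p :=
        sum_rpow_conv_le hp ha has (fun j => abs_nonneg _) N
    _ ≤ K ^ p * (2 ^ (p - 1) * (ε ^ p * (|x 0| ^ p + T) + N * C₀ ^ p)) :=
        mul_le_mul_of_nonneg_left hf_sum hKp
    _ = A * ε ^ p * (|x 0| ^ p + T) + A * C₀ ^ p * N := by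
        rw [hA_def]; ring
    _ ≤ δ * (|x 0| ^ p + T) + A * C₀ ^ p * (N + 1) := by
        gcongr
        linarith
    _ ≤ δ * T + (δ * |x 0| ^ p + A * C₀ ^ p) * (N + 1) := by
        have : δ * |x 0| ^ p ≤ δ * |x 0| ^ p * (N + 1) :=
          le_mul_of_one_le_right (by positivity) (by linarith [N.cast_nonneg (α := ℝ)])
        linarith

theorem sum_Icc_one_eq_sum_range {M : Type*} [AddCommMonoid M] (g : ℕ → M) (N : ℕ) :
    ∑ j ∈ Icc 1 N, g j = ∑ m ∈ range N, g (m + 1) := by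
  rw [← Ico_add_one_right_eq_Icc, sum_Ico_eq_sum_range, add_tsub_cancel_right]
  simp only [add_comm]

theorem limsup_one_div_mul_lt_top_iff_isBigO {c : ℕ → ℝ} (hc : ∀ n, 0 ≤ c n) :
    limsup (fun n : ℕ => ((1 / (n : ℝ) * c n : ℝ) : EReal)) atTop < ⊤ ↔
      c =O[atTop] (fun n => (n : ℝ)) := by
  constructor
  · intro h
    obtain ⟨b, hb, -⟩ := EReal.lt_iff_exists_real_btwn.mp h
    refine IsBigO.of_bound b ?_
    filter_upwards [eventually_lt_of_limsup_lt hb, eventually_ge_atTop 1] with n hlt hn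
    have hn : (0 : ℝ) < n := by exact_mod_cast hn
    rw [EReal.coe_lt_coe_iff, one_div, inv_mul_lt_iff₀ hn] at hlt
    rw [Real.norm_of_nonneg (hc n), Real.norm_natCast]
    linarith
  · intro h
    obtain ⟨C, hC⟩ := h.bound
    refine lt_of_le_of_lt (limsup_le_of_le (by isBoundedDefault) ?_) (EReal.coe_lt_top C)
    filter_upwards [hC, eventually_ge_atTop 1] with n hcn hn
    have hn : (0 : ℝ) < n := by exact_mod_cast hn
    rw [Real.norm_of_nonneg (hc n), Real.norm_natCast] at hcn
    rw [EReal.coe_le_coe_iff, one_div, inv_mul_le_iff₀ hn]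
    linarith

theorem isBigO_natCast_of_le {a b : ℕ → ℝ} {α β : ℝ} (ha : ∀ n, 0 ≤ a n)
    (hb : b =O[atTop] (fun n => (n : ℝ))) (hab : ∀ n, a n ≤ α * b n + β * (n + 1)) :
    a =O[atTop] (fun n => (n : ℝ)) := by
  have hone : (fun _ : ℕ => (1 : ℝ)) =O[atTop] (fun n => (n : ℝ)) :=
    (isBigO_const_left_iff_pos_le_norm one_ne_zero).2 ⟨1, one_pos, by
      filter_upwards [eventually_ge_atTop 1] with n hn
      rw [Real.norm_natCast]; exact_mod_cast hn⟩
  refine IsBigO.trans ?_ ((hb.const_mul_left α).add (((isBigO_refl _ _).add hone).const_mul_left β))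
  exact isBigO_of_le _ fun n => by
    rw [Real.norm_of_nonneg (ha n)]
    exact (hab n).trans (Real.le_norm_self _)

theorem isBigO_sum_rpow_of_abs_le_add {p : ℝ} (hp : 1 ≤ p) {u v r : ℕ → ℝ}
    (hr : ∀ m, 0 ≤ r m) (huv : ∀ m, |u m| ≤ |v m| + r m)
    (hr_sum : ∀ δ > 0, ∃ C, ∀ N : ℕ, ∑ m ∈ range N, r m ^ p ≤
      δ * (∑ m ∈ range N, |u m| ^ p + ∑ m ∈ range N, |v m| ^ p) + C * (N + 1))
    (hv : (fun N => ∑ m ∈ range N, |v m| ^ p) =O[atTop] (fun n => (n : ℝ))) :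
    (fun N => ∑ m ∈ range N, |u m| ^ p) =O[atTop] (fun n => (n : ℝ)) := by
  set B : ℝ := 2 ^ (p - 1)
  have hB : 0 < B := by positivity
  obtain ⟨C, hC⟩ := hr_sum (1 / (2 * B)) (by positivity)
  refine isBigO_natCast_of_le (α := 2 * B + 1) (β := 2 * B * C)
    (fun N => sum_nonneg fun m _ => by positivity) hv fun N => ?_
  have hsplit := sum_rpow_le_of_abs_le_add (range N) hp (fun m => abs_nonneg _) hr huv
  have hr_sum_N := mul_le_mul_of_nonneg_left (hC N) hB.le
  have hBδ : B * (1 / (2 * B)) = 1 / 2 := by field_simp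
  rw [mul_add, ← mul_assoc, hBδ] at hr_sum_N
  linarith

theorem stmt18_general
(f : ℝ → ℝ) (k H x : ℕ → ℝ)
    (hf : Continuous f)
    (hsub : Filter.Tendsto (fun y => f y / y) (Filter.cocompact ℝ) (nhds 0))
    (hk : Summable (fun j => |k j|))
    (hx : ∀ n : ℕ, x (n + 1) = H (n + 1) + ∑ j ∈ Finset.range (n + 1), k (n - j) * f (x j))
    (p : ℝ) (hp : 1 ≤ p) :
    Filter.limsup
      (fun n : ℕ => ((1 / (n : ℝ) * ∑ j ∈ Finset.Icc 1 n, |H j| ^ p : ℝ) : EReal))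
      Filter.atTop < ⊤ ↔
    Filter.limsup
      (fun n : ℕ => ((1 / (n : ℝ) * ∑ j ∈ Finset.Icc 1 n, |x j| ^ p : ℝ) : EReal))
      Filter.atTop < ⊤ := by
  simp only [sum_Icc_one_eq_sum_range]
  rw [limsup_one_div_mul_lt_top_iff_isBigO fun N => sum_nonneg fun m _ => by positivity,
    limsup_one_div_mul_lt_top_iff_isBigO fun N => sum_nonneg fun m _ => by positivity]
  set R : ℕ → ℝ := fun m => ∑ j ∈ range (m + 1), |k (m - j)| * |f (x j)|
  have hR_nonneg (m : ℕ) : 0 ≤ R m := sum_nonneg fun j _ => by positivity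
  have hR (m : ℕ) : |x (m + 1) - H (m + 1)| ≤ R m := by
    rw [hx m, add_sub_cancel_left]
    exact (abs_sum_le_sum_abs _ _).trans_eq (sum_congr rfl fun j _ => abs_mul _ _)
  have hR_sum : ∀ δ > 0, ∃ C, ∀ N : ℕ, ∑ m ∈ range N, R m ^ p ≤
      δ * (∑ m ∈ range N, |x (m + 1)| ^ p + ∑ m ∈ range N, |H (m + 1)| ^ p) + C * (N + 1) := by
    intro δ hδ
    obtain ⟨C, hC⟩ := exists_sum_rpow_conv_le hf hsub (fun i => abs_nonneg (k i)) hk x hp hδ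
    refine ⟨C, fun N => (hC N).trans ?_⟩
    gcongr
    exact le_add_of_nonneg_right (sum_nonneg fun m _ => by positivity)
  constructor
  · refine isBigO_sum_rpow_of_abs_le_add hp hR_nonneg (fun m => ?_) hR_sum
    linarith [abs_sub_abs_le_abs_sub (x (m + 1)) (H (m + 1)), hR m]
  · refine isBigO_sum_rpow_of_abs_le_add hp hR_nonneg (fun m => ?_) fun δ hδ => ?_
    · linarith [abs_sub_abs_le_abs_sub (H (m + 1)) (x (m + 1)),
        abs_sub_comm (x (m + 1)) (H (m + 1)), hR m]
    · simpa only [add_comm (∑ m ∈ range _, |H (m + 1)| ^ p)] using hR_sum δ hδ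

theorem stmt18
(f : ℝ → ℝ) (k H x : ℕ → ℝ) (ξ : ℝ)
    (hf : Continuous f)
    (hsub : Filter.Tendsto (fun y => f y / y) (Filter.cocompact ℝ) (nhds 0))
    (hk : Summable (fun j => |k j|))
    (hx0 : x 0 = ξ)
    (hx : ∀ n : ℕ, x (n + 1) = H (n + 1) + ∑ j ∈ Finset.range (n + 1), k (n - j) * f (x j))
    (p : ℝ) (hp : 1 ≤ p) :
    Filter.limsup
      (fun n : ℕ => ((1 / (n : ℝ) * ∑ j ∈ Finset.Icc 1 n, |H j| ^ p : ℝ) : EReal))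
      Filter.atTop < ⊤ ↔
    Filter.limsup
      (fun n : ℕ => ((1 / (n : ℝ) * ∑ j ∈ Finset.Icc 1 n, |x j| ^ p : ℝ) : EReal))
      Filter.atTop < ⊤ :=
  stmt18_general f k H x hf hsub hk hx p hp
end
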